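/- Fix q ∈ ℂ with q ≠ 0 and q not a root of unity. Let (e₋₁, e₁, A) be a Podleś representation with parameter c = 0 on a finite-dimensional complex vector space V. Then there exist subspaces V₊, V₀₀, V₋ of V, each invariant under e₋₁, e₁ and A, with V = V₊ ⊕ V₀₀ ⊕ V₋, such that: the restriction of e₁ to V₊ is bijective and the restriction of e₋₁ to V₊ is nilpotent; the restrictions of both e₁ and e₋₁ to V₀₀ are nilpotent; the restriction of e₋₁ to V₋ is bijective and the restriction of e₁ to V₋ is nilpotent. -/

import Mathlib

/-- A Podleś representation with parameter `c` on a complex vector space. -/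
def PodlesRep (q c : ℂ) {V : Type*} [AddCommGroup V] [Module ℂ V]
    (em e1 A : Module.End ℂ V) : Prop :=
  em * e1 = A - A ^ 2 + c • (1 : Module.End ℂ V) ∧
  e1 * em = q ^ 2 • A - q ^ 4 • A ^ 2 + c • (1 : Module.End ℂ V) ∧
  e1 * A = q ^ 2 • (A * e1) ∧
  em * A = (q ^ 2)⁻¹ • (A * em)

/-!
Write `N(f) = ⨆ n, ker fⁿ` and `R(f) = ⨅ n, range fⁿ`, so that `V = N(f) ⊕ R(f)` (Fitting).
For `f = e₁, e₋₁` these four subspaces are invariant under `e₋₁, e₁, A`: `A` quasi-commutes with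
`f`, and both products `e₋₁e₁`, `e₁e₋₁` are polynomials in `A`. On `W = R(e₁) ∩ R(e₋₁)` the maps
`e₁` and `A` are injective (the latter since `e₋₁e₁ = A(1 - A)`), so taking determinants in
`e₁A = q²Ae₁` gives `q^(2 dim W) = 1`, hence `W = 0`. Consequently `e₋₁` is nilpotent on `R(e₁)`
and `e₁` on `R(e₋₁)`, i.e. `R(e₁) ≤ N(e₋₁)` and `R(e₋₁) ≤ N(e₁)`, and the modular law splits
`V = R(e₁) ⊕ (N(e₁) ∩ N(e₋₁)) ⊕ R(e₋₁)`.
-/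

open LinearMap Polynomial Module

namespace Module.End

section QuasiCommuting

variable {K V : Type*} [Field K] [AddCommGroup V] [Module K V] {f g A : End K V} {c : K}

theorem pow_mul_eq_smul_mul_pow (h : f * A = c • (A * f)) (n : ℕ) :
    f ^ n * A = c ^ n • (A * f ^ n) := by
  induction n with
  | zero => simp
  | succ n ih =>
    rw [pow_succ', mul_assoc, ih, mul_smul_comm, ← mul_assoc, h, smul_mul_assoc, smul_smul,
      mul_assoc, ← pow_succ', ← pow_succ]

theorem ker_pow_mem_invtSubmodule (h : f * A = c • (A * f)) (n : ℕ) :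
    ker (f ^ n) ∈ A.invtSubmodule := by
  intro x (hx : (f ^ n) x = 0)
  change (f ^ n) (A x) = 0
  rw [← mul_apply, pow_mul_eq_smul_mul_pow h, LinearMap.smul_apply, mul_apply, hx, map_zero,
    smul_zero]

theorem range_pow_mem_invtSubmodule (hc : c ≠ 0) (h : f * A = c • (A * f)) (n : ℕ) :
    range (f ^ n) ∈ A.invtSubmodule := by
  rintro _ ⟨y, rfl⟩
  refine ⟨(c ^ n)⁻¹ • A y, ?_⟩
  rw [map_smul, ← mul_apply, pow_mul_eq_smul_mul_pow h, LinearMap.smul_apply,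
    inv_smul_smul₀ (pow_ne_zero n hc), mul_apply]

theorem iInf_range_pow_mem_invtSubmodule (hc : c ≠ 0) (h : f * A = c • (A * f)) :
    (⨅ n, range (f ^ n)) ∈ A.invtSubmodule := by
  intro x hx
  simp only [Submodule.mem_comap, Submodule.mem_iInf] at hx ⊢
  exact fun n ↦ range_pow_mem_invtSubmodule hc h n (hx n)

theorem iSup_ker_pow_mem_invtSubmodule (h : f * A = c • (A * f)) :
    (⨆ n, ker (f ^ n)) ∈ A.invtSubmodule :=
  iSup_le fun n ↦ (ker_pow_mem_invtSubmodule h n).trans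
    (Submodule.comap_mono (le_iSup (fun n ↦ ker (f ^ n)) n))

theorem iInf_range_pow_mem_invtSubmodule_of_mul_eq_aeval (hc : c ≠ 0) (h : f * A = c • (A * f))
    {p : K[X]} (hgf : g * f = aeval A p) : (⨅ n, range (f ^ n)) ∈ g.invtSubmodule := by
  intro x hx
  simp only [Submodule.mem_comap, Submodule.mem_iInf] at hx ⊢
  intro n
  obtain ⟨y, rfl⟩ := hx (n + 1)
  rw [pow_succ', mul_apply, ← mul_apply g, hgf]
  exact aeval_apply_smul_mem_of_le_comap (mem_range_self _ y) p A
    (range_pow_mem_invtSubmodule hc h n)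

theorem iSup_ker_pow_mem_invtSubmodule_of_mul_eq_aeval (h : f * A = c • (A * f))
    {p : K[X]} (hfg : f * g = aeval A p) : (⨆ n, ker (f ^ n)) ∈ g.invtSubmodule := by
  refine (mem_invtSubmodule g).mpr <| iSup_le fun n x hx ↦ Submodule.mem_iSup_of_mem (n + 1) ?_
  rw [mem_ker, pow_succ, mul_apply, ← mul_apply f, hfg]
  exact aeval_apply_smul_mem_of_le_comap hx p A (ker_pow_mem_invtSubmodule h n)

theorem iInf_range_pow_and_iSup_ker_pow_mem_invtSubmodule (hc : c ≠ 0) (h : f * A = c • (A * f))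
    {p r : K[X]} (hgf : g * f = aeval A p) (hfg : f * g = aeval A r) :
    (⨅ n, range (f ^ n)) ∈ g.invtSubmodule ⊓ f.invtSubmodule ⊓ A.invtSubmodule ∧
      (⨆ n, ker (f ^ n)) ∈ g.invtSubmodule ⊓ f.invtSubmodule ⊓ A.invtSubmodule :=
  ⟨⟨⟨iInf_range_pow_mem_invtSubmodule_of_mul_eq_aeval hc h hgf,
      iInf_range_pow_mem_invtSubmodule one_ne_zero (one_smul K _).symm⟩,
      iInf_range_pow_mem_invtSubmodule hc h⟩,
    ⟨⟨iSup_ker_pow_mem_invtSubmodule_of_mul_eq_aeval h hfg,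
      iSup_ker_pow_mem_invtSubmodule (one_smul K _).symm⟩, iSup_ker_pow_mem_invtSubmodule h⟩⟩

end QuasiCommuting

section Fitting

variable {R M : Type*} [Ring R] [AddCommGroup M] [Module R M] (f : End R M)

theorem exists_pow_apply_eq_zero_of_mem_iSup_ker_pow [IsNoetherian R M] :
    ∃ k : ℕ, ∀ x ∈ ⨆ n, ker (f ^ n), (f ^ k) x = 0 := by
  obtain ⟨k, hk⟩ := (f.eventually_iSup_ker_pow_eq).exists
  exact ⟨k, fun x hx ↦ by rwa [hk] at hx⟩

variable [IsArtinian R M]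

theorem exists_apply_eq_of_mem_iInf_range_pow :
    ∀ y ∈ ⨅ n, range (f ^ n), ∃ x ∈ ⨅ n, range (f ^ n), f x = y := by
  obtain ⟨k, hk⟩ := (f.eventually_iInf_range_pow_eq).exists
  intro y hy
  obtain ⟨z, rfl⟩ := Submodule.mem_iInf _ |>.mp hy (k + 1)
  refine ⟨(f ^ k) z, hk ▸ mem_range_self _ z, ?_⟩
  rw [pow_succ', mul_apply]

theorem eq_zero_of_mem_iInf_range_pow_of_apply_eq_zero [IsNoetherian R M] :
    ∀ x ∈ ⨅ n, range (f ^ n), f x = 0 → x = 0 := by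
  intro x hx hfx
  have hker : x ∈ ⨆ n, ker (f ^ n) := Submodule.mem_iSup_of_mem 1 (by simpa using hfx)
  exact Submodule.disjoint_def.mp f.isCompl_iSup_ker_pow_iInf_range_pow.disjoint x hker hx

theorem le_iSup_ker_pow_of_disjoint_iInf_range_pow {W : Submodule R M}
    (hW : W ∈ f.invtSubmodule) (hdisj : Disjoint W (⨅ n, range (f ^ n))) :
    W ≤ ⨆ n, ker (f ^ n) := by
  obtain ⟨k, hk⟩ := (f.eventually_iInf_range_pow_eq).exists
  intro x hx
  have hW' : (f ^ k) x ∈ W := by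
    rw [pow_apply]
    exact ((mem_invtSubmodule_iff_mapsTo f).mp hW).iterate k hx
  have : (f ^ k) x = 0 :=
    Submodule.disjoint_def.mp hdisj _ hW' (hk ▸ mem_range_self _ x)
  exact Submodule.mem_iSup_of_mem k this

end Fitting

section Determinant

variable {K V : Type*} [Field K] [AddCommGroup V] [Module K V] [FiniteDimensional K V]

theorem pow_finrank_eq_one_of_mul_eq_smul_mul {E B : End K V} {c : K} (hE : IsUnit E)
    (hB : IsUnit B) (h : E * B = c • (B * E)) : c ^ finrank K V = 1 := by
  have hdet : LinearMap.det (E * B) ≠ 0 := ((hE.mul hB).map LinearMap.det).ne_zero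
  have := congrArg LinearMap.det h
  rw [LinearMap.det_smul, map_mul, map_mul, mul_comm (LinearMap.det B), ← map_mul] at this
  exact (mul_eq_right₀ hdet).mp this.symm

theorem isUnit_restrict {f : End K V} {W : Submodule K V} (hW : W ∈ f.invtSubmodule)
    (hf : ∀ x ∈ W, f x = 0 → x = 0) : IsUnit (f.restrict hW) := by
  have hinj : Function.Injective (f.restrict hW) := by
    refine (injective_iff_map_eq_zero _).mpr fun x hx ↦ Subtype.ext (hf x x.2 ?_)
    exact congrArg Subtype.val hx
  exact (isUnit_iff _).mpr ⟨hinj, injective_iff_surjective.mp hinj⟩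

theorem eq_bot_of_mul_eq_smul_mul {f A : End K V} {c : K} (hc : ∀ k, 0 < k → c ^ k ≠ 1)
    (h : f * A = c • (A * f)) {W : Submodule K V} (hWf : W ∈ f.invtSubmodule)
    (hWA : W ∈ A.invtSubmodule) (hf : ∀ x ∈ W, f x = 0 → x = 0)
    (hA : ∀ x ∈ W, A x = 0 → x = 0) : W = ⊥ := by
  by_contra hW
  have : Nontrivial W := Submodule.nontrivial_iff_ne_bot.mpr hW
  refine hc _ finrank_pos (pow_finrank_eq_one_of_mul_eq_smul_mul (isUnit_restrict hWf hf)
    (isUnit_restrict hWA hA) ?_)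
  ext x
  exact congrArg (· (x : V)) h

end Determinant

end Module.End

open Module.End

theorem iSupIndep_and_sup_eq_top_of_isCompl {α : Type*} [CompleteLattice α] [IsModularLattice α]
    {p k m n : α}
    (hpk : IsCompl p k) (hmn : IsCompl m n) (hmk : m ≤ k) (hpn : p ≤ n) :
    iSupIndep ![p, k ⊓ n, m] ∧ p ⊔ k ⊓ n ⊔ m = ⊤ := by
  have hk : k ⊓ n ⊔ m = k := by
    rw [sup_comm, inf_comm, ← sup_inf_assoc_of_le n hmk, hmn.sup_eq_top, top_inf_eq]
  have hkpm : k ⊓ (p ⊔ m) = m := by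
    rw [inf_comm, sup_comm, sup_inf_assoc_of_le p hmk, hpk.inf_eq_bot, sup_bot_eq]
  refine ⟨iSupIndep_fin_three.mpr ⟨?_, ?_, ?_⟩, ?_⟩
  · simpa [hk] using hpk.disjoint
  · show Disjoint (k ⊓ n) (m ⊔ p)
    rw [disjoint_iff_inf_le]
    calc k ⊓ n ⊓ (m ⊔ p) = n ⊓ (k ⊓ (p ⊔ m)) := by rw [sup_comm m]; ac_rfl
      _ = n ⊓ m := by rw [hkpm]
      _ ≤ ⊥ := hmn.disjoint.symm.le_bot
  · simpa using hmn.disjoint.mono_right (sup_le hpn inf_le_right)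
  · rw [sup_assoc, hk, hpk.sup_eq_top]

theorem stmt9 {V : Type*} [AddCommGroup V] [Module ℂ V] [FiniteDimensional ℂ V]
    (q : ℂ) (hq : q ≠ 0) (hq' : ∀ k : ℕ, 0 < k → q ^ k ≠ 1)
    (em e1 A : Module.End ℂ V) (hrep : PodlesRep q 0 em e1 A) :
    ∃ Vp V00 Vm : Submodule ℂ V,
      iSupIndep ![Vp, V00, Vm] ∧ Vp ⊔ V00 ⊔ Vm = ⊤ ∧
      (∀ x ∈ Vp, em x ∈ Vp) ∧ (∀ x ∈ Vp, e1 x ∈ Vp) ∧ (∀ x ∈ Vp, A x ∈ Vp) ∧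
      (∀ x ∈ V00, em x ∈ V00) ∧ (∀ x ∈ V00, e1 x ∈ V00) ∧ (∀ x ∈ V00, A x ∈ V00) ∧
      (∀ x ∈ Vm, em x ∈ Vm) ∧ (∀ x ∈ Vm, e1 x ∈ Vm) ∧ (∀ x ∈ Vm, A x ∈ Vm) ∧
      (∀ x ∈ Vp, e1 x = 0 → x = 0) ∧ (∀ y ∈ Vp, ∃ x ∈ Vp, e1 x = y) ∧
      (∃ k : ℕ, ∀ x ∈ Vp, (em ^ k) x = 0) ∧
      (∃ k : ℕ, ∀ x ∈ V00, (e1 ^ k) x = 0) ∧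
      (∃ k : ℕ, ∀ x ∈ V00, (em ^ k) x = 0) ∧
      (∀ x ∈ Vm, em x = 0 → x = 0) ∧ (∀ y ∈ Vm, ∃ x ∈ Vm, em x = y) ∧
      (∃ k : ℕ, ∀ x ∈ Vm, (e1 ^ k) x = 0) := by
  obtain ⟨hme, hem, he1A, hemA⟩ := hrep
  rw [zero_smul, add_zero] at hme hem
  have hc : q ^ 2 ≠ 0 := pow_ne_zero 2 hq
  have hme' : em * e1 = aeval A (X - X ^ 2 : ℂ[X]) := by simp [hme]
  have hem' : e1 * em = aeval A (C (q ^ 2) * X - C (q ^ 4) * X ^ 2) := by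
    simp [hem, Algebra.smul_def]
  obtain ⟨hVp, hKp⟩ := iInf_range_pow_and_iSup_ker_pow_mem_invtSubmodule hc he1A hme' hem'
  obtain ⟨hVm, hKm⟩ :=
    iInf_range_pow_and_iSup_ker_pow_mem_invtSubmodule (inv_ne_zero hc) hemA hem' hme'
  rw [inf_comm e1.invtSubmodule] at hVm hKm
  have hV00 := Sublattice.inf_mem hKp hKm
  have hVpm : (⨅ n, range (e1 ^ n)) ⊓ ⨅ n, range (em ^ n) = ⊥ := by
    refine eq_bot_of_mul_eq_smul_mul (fun k hk ↦ by rw [← pow_mul]; exact hq' _ (by omega)) he1A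
      (invtSubmodule.inf_mem hVp.1.2 hVm.1.2) (invtSubmodule.inf_mem hVp.2 hVm.2)
      (fun x hx ↦ eq_zero_of_mem_iInf_range_pow_of_apply_eq_zero e1 x hx.1) fun x hx hAx ↦ ?_
    have hemx : em (e1 x) = 0 := by simp [← mul_apply, hme, sq, hAx]
    exact eq_zero_of_mem_iInf_range_pow_of_apply_eq_zero e1 x hx.1 <|
      eq_zero_of_mem_iInf_range_pow_of_apply_eq_zero em _ (hVm.1.2 hx.2) hemx
  have hVpKm := le_iSup_ker_pow_of_disjoint_iInf_range_pow em hVp.1.1 (disjoint_iff.mpr hVpm)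
  have hVmKp := le_iSup_ker_pow_of_disjoint_iInf_range_pow e1 hVm.1.2
    (disjoint_iff.mpr (inf_comm (⨅ n, range (e1 ^ n)) _ ▸ hVpm))
  obtain ⟨a, ha⟩ := exists_pow_apply_eq_zero_of_mem_iSup_ker_pow e1
  obtain ⟨b, hb⟩ := exists_pow_apply_eq_zero_of_mem_iSup_ker_pow em
  obtain ⟨hindep, htop⟩ := iSupIndep_and_sup_eq_top_of_isCompl
    e1.isCompl_iSup_ker_pow_iInf_range_pow.symm em.isCompl_iSup_ker_pow_iInf_range_pow.symm
    hVmKp hVpKm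
  exact ⟨_, _, _, hindep, htop, hVp.1.1, hVp.1.2, hVp.2, hV00.1.1, hV00.1.2, hV00.2,
    hVm.1.1, hVm.1.2, hVm.2, eq_zero_of_mem_iInf_range_pow_of_apply_eq_zero e1,
    exists_apply_eq_of_mem_iInf_range_pow e1, ⟨b, fun x hx ↦ hb x (hVpKm hx)⟩,
    ⟨a, fun x hx ↦ ha x hx.1⟩, ⟨b, fun x hx ↦ hb x hx.2⟩,
    eq_zero_of_mem_iInf_range_pow_of_apply_eq_zero em, exists_apply_eq_of_mem_iInf_range_pow em,
    ⟨a, fun x hx ↦ ha x (hVmKp hx)⟩⟩
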